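/- arXiv:2502.18994 — 2 statements merged into one kernel-verified Lean document; each statement's English description precedes it below -/
import Mathlib

section
/- Fix a covariate value x and a probability p ∈ (0,1). Suppose for each a ∈ {0,1} the bias b(a) := E[S(a) | X=x, A=0, G=O] − E[S(a) | X=x, A=1, G=O] equals the corresponding long-term bias B(a) := E[Y(a) | X=x, A=0, G=O] − E[Y(a) | X=x, A=1, G=O] (the CAECB assumption). Then the conditional long-term effect decomposes as E[Y(1) − Y(0) | X=x, G=O] = (E[Y | X=x, A=1, G=O] − E[Y | X=x, A=0, G=O]) + B(1)·(1−p) + B(0)·p, where p = P(A=1 | X=x, G=O), Y = Y(A) by consistency, and similarly the short-term effect decomposes with b(1), b(0); hence the difference of the two effects equals the difference of the observed mean contrasts. -/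
/-- Core computation in the proof of Theorem 3.1 (CAECB identification), as a
finite algebraic identity.  `mY a` and `mS a` are the observed conditional
means `E[Y | X=x, A=a, G=O]` and `E[S | X=x, A=a, G=O]`; `EY a a'` and
`ES a a'` are the cross-arm potential-outcome means `E[Y(a) | X=x, A=a', G=O]`
and `E[S(a) | X=x, A=a', G=O]`; consistency equates the diagonal entries with
the observed means; `p = P(A=1 | X=x, G=O)`. -/
theorem caecb_core_decomposition
    (p : ℝ) (hp0 : 0 < p) (hp1 : p < 1)
    (mY mS : Bool → ℝ) (EY ES : Bool → Bool → ℝ)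
    -- consistency
    (hconsY : ∀ a : Bool, EY a a = mY a)
    (hconsS : ∀ a : Bool, ES a a = mS a)
    -- biases
    (B b : Bool → ℝ)
    (hB : ∀ a : Bool, B a = EY a false - EY a true)
    (hb : ∀ a : Bool, b a = ES a false - ES a true)
    -- the CAECB assumption
    (hcaecb : ∀ a : Bool, b a = B a)
    -- law of total expectation: conditional means of potential outcomes
    (EYmarg ESmarg : Bool → ℝ)
    (hEYmarg : ∀ a : Bool, EYmarg a = EY a true * p + EY a false * (1 - p))
    (hESmarg : ∀ a : Bool, ESmarg a = ES a true * p + ES a false * (1 - p)) :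
    EYmarg true - EYmarg false
        = (mY true - mY false) + B true * (1 - p) + B false * p
    ∧ ESmarg true - ESmarg false
        = (mS true - mS false) + b true * (1 - p) + b false * p
    ∧ (EYmarg true - EYmarg false) - (ESmarg true - ESmarg false)
        = (mY true - mY false) - (mS true - mS false) := by
  have h1 := hconsY true; have h2 := hconsY false
  have h3 := hconsS true; have h4 := hconsS false
  have h5 := hB true; have h6 := hB false
  have h7 := hb true; have h8 := hb false
  have h9 := hcaecb true; have h10 := hcaecb false
  refine ⟨?_, ?_, ?_⟩ <;>
  simp only [hEYmarg, hESmarg, h5, h6, h7, h8] <;> nlinarith [hcaecb true, hcaecb false, hb true, hb false, hB true, hB false]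
end

section
/- Under the hypotheses of the CAECB identification (consistency, positivity, internal validity of experimental data, data combination, and equal short- and long-term confounding bias), the heterogeneous long-term causal effect satisfies τ(x) = E[Y(1) − Y(0) | X = x] = (μ_Y^O(1,x) − μ_Y^O(0,x)) + (μ_S^E(1,x) − μ_S^E(0,x)) + (μ_S^O(0,x) − μ_S^O(1,x)), where μ_W^G(a,x) := E[W | A=a, X=x, G]. -/
open Classical

/-- Conditional expectation of `f` given the event `P`, defined via indicator
ratios, in a finite probability setting with weights `w`. -/
noncomputable def cexp {Ω : Type*} [Fintype Ω] (w : Ω → ℝ) (P : Ω → Prop)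
    (f : Ω → ℝ) : ℝ :=
  (∑ ω, if P ω then w ω * f ω else 0) / (∑ ω, if P ω then w ω else 0)

/-- Canonical numerator of `cexp`. -/
noncomputable def nsum {Ω : Type*} [Fintype Ω] (w : Ω → ℝ) (P : Ω → Prop)
    (f : Ω → ℝ) : ℝ := ∑ ω, if P ω then w ω * f ω else 0

/-- Canonical denominator of `cexp`. -/
noncomputable def dsum {Ω : Type*} [Fintype Ω] (w : Ω → ℝ) (P : Ω → Prop) : ℝ :=
  ∑ ω, if P ω then w ω else 0

lemma cexp_def {Ω : Type*} [Fintype Ω] (w : Ω → ℝ) (P : Ω → Prop) (f : Ω → ℝ) :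
    cexp w P f = nsum w P f / dsum w P := rfl

lemma cexp_pred_congr {Ω : Type*} [Fintype Ω] (w : Ω → ℝ) {P Q : Ω → Prop}
    (f : Ω → ℝ) (h : ∀ ω, P ω ↔ Q ω) : cexp w P f = cexp w Q f := by
  unfold cexp
  congr 1 <;> exact Finset.sum_congr rfl (fun ω _ => by rw [if_congr (h ω) rfl rfl])

lemma cexp_fun_congr {Ω : Type*} [Fintype Ω] (w : Ω → ℝ) {P : Ω → Prop}
    {f g : Ω → ℝ} (h : ∀ ω, P ω → f ω = g ω) : cexp w P f = cexp w P g := by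
  unfold cexp
  congr 1
  apply Finset.sum_congr rfl
  intro ω _
  by_cases hp : P ω
  · simp [hp, h ω hp]
  · simp [hp]

lemma cexp_sub {Ω : Type*} [Fintype Ω] (w : Ω → ℝ) (P : Ω → Prop)
    (f g : Ω → ℝ) :
    cexp w P (fun ω => f ω - g ω) = cexp w P f - cexp w P g := by
  unfold cexp
  rw [← sub_div, ← Finset.sum_sub_distrib]
  congr 1
  apply Finset.sum_congr rfl
  intro ω _
  by_cases hp : P ω <;> simp [hp, mul_sub]

/-- Theorem 3.1 of the paper: identification of the heterogeneous long-term
causal effect under consistency, positivity, internal validity of the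
experimental data, data combination, and the Conditional Additive
Equi-Confounding Bias (CAECB) assumption.  Here `Gp ω = true` means the
experimental group `E` and `Gp ω = false` means the observational group `O`;
conditional independence is stated via arbitrary test functions of the
pair of potential outcomes. -/
theorem caecb_identification
    {Ω 𝒳 : Type*} [Fintype Ω] (w : Ω → ℝ)
    (hw_nonneg : ∀ ω, 0 ≤ w ω) (hw_sum : ∑ ω, w ω = 1)
    (A Gp : Ω → Bool) (X : Ω → 𝒳)
    (Ypot Spot : Bool → Ω → ℝ) (Yobs Sobs : Ω → ℝ)
    -- consistency
    (hconsY : ∀ ω, Yobs ω = Ypot (A ω) ω)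
    (hconsS : ∀ ω, Sobs ω = Spot (A ω) ω)
    -- positivity
    (hpos : ∀ (x : 𝒳) (a g : Bool),
      0 < ∑ ω, if X ω = x ∧ A ω = a ∧ Gp ω = g then w ω else 0)
    -- internal validity of the experiment: A ⫫ {Y(a),S(a)} | X, G = E
    (hinternal : ∀ (x : 𝒳) (a a' : Bool) (φ : ℝ × ℝ → ℝ),
      cexp w (fun ω => X ω = x ∧ Gp ω = true ∧ A ω = a')
          (fun ω => φ (Ypot a ω, Spot a ω))
        = cexp w (fun ω => X ω = x ∧ Gp ω = true)
          (fun ω => φ (Ypot a ω, Spot a ω)))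
    -- data combination: G ⫫ {Y(a),S(a)} | X
    (hexternal : ∀ (x : 𝒳) (a g : Bool) (φ : ℝ × ℝ → ℝ),
      cexp w (fun ω => X ω = x ∧ Gp ω = g)
          (fun ω => φ (Ypot a ω, Spot a ω))
        = cexp w (fun ω => X ω = x) (fun ω => φ (Ypot a ω, Spot a ω)))
    -- CAECB assumption
    (hcaecb : ∀ (x : 𝒳) (a : Bool),
      cexp w (fun ω => X ω = x ∧ A ω = false ∧ Gp ω = false) (Spot a)
          - cexp w (fun ω => X ω = x ∧ A ω = true ∧ Gp ω = false) (Spot a)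
        = cexp w (fun ω => X ω = x ∧ A ω = false ∧ Gp ω = false) (Ypot a)
          - cexp w (fun ω => X ω = x ∧ A ω = true ∧ Gp ω = false) (Ypot a)) :
    ∀ x : 𝒳,
      cexp w (fun ω => X ω = x) (fun ω => Ypot true ω - Ypot false ω)
        = (cexp w (fun ω => X ω = x ∧ A ω = true ∧ Gp ω = false) Yobs
            - cexp w (fun ω => X ω = x ∧ A ω = false ∧ Gp ω = false) Yobs)
          + (cexp w (fun ω => X ω = x ∧ A ω = true ∧ Gp ω = true) Sobs
            - cexp w (fun ω => X ω = x ∧ A ω = false ∧ Gp ω = true) Sobs)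
          + (cexp w (fun ω => X ω = x ∧ A ω = false ∧ Gp ω = false) Sobs
            - cexp w (fun ω => X ω = x ∧ A ω = true ∧ Gp ω = false) Sobs) := by
  intro x
  -- arm denominators in the observational group
  set D1 : ℝ := dsum w (fun ω => X ω = x ∧ A ω = true ∧ Gp ω = false) with hD1
  set D0 : ℝ := dsum w (fun ω => X ω = x ∧ A ω = false ∧ Gp ω = false) with hD0
  have hD1pos : 0 < D1 := by
    rw [hD1]
    refine lt_of_lt_of_le (hpos x true false) (le_of_eq ?_)
    unfold dsum
    refine Finset.sum_congr rfl fun ω _ => ?_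
    by_cases h : X ω = x ∧ A ω = true ∧ Gp ω = false
    · rw [if_pos h, if_pos h]
    · rw [if_neg h, if_neg h]
  have hD0pos : 0 < D0 := by
    rw [hD0]
    refine lt_of_lt_of_le (hpos x false false) (le_of_eq ?_)
    unfold dsum
    refine Finset.sum_congr rfl fun ω _ => ?_
    by_cases h : X ω = x ∧ A ω = false ∧ Gp ω = false
    · rw [if_pos h, if_pos h]
    · rw [if_neg h, if_neg h]
  have hDO : (0:ℝ) < D1 + D0 := by linarith
  -- splitting of numerator/denominator of the observational group into arms
  have nsplit : ∀ f : Ω → ℝ,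
      nsum w (fun ω => X ω = x ∧ Gp ω = false) f
        = nsum w (fun ω => X ω = x ∧ A ω = true ∧ Gp ω = false) f
          + nsum w (fun ω => X ω = x ∧ A ω = false ∧ Gp ω = false) f := by
    intro f
    unfold nsum
    rw [← Finset.sum_add_distrib]
    refine Finset.sum_congr rfl (fun ω _ => ?_)
    by_cases h1 : X ω = x <;> by_cases h2 : Gp ω = false <;> cases h3 : A ω <;>
      simp [h1, h2, h3]
  have dsplit :
      dsum w (fun ω => X ω = x ∧ Gp ω = false) = D1 + D0 := by
    rw [hD1, hD0]
    unfold dsum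
    rw [← Finset.sum_add_distrib]
    refine Finset.sum_congr rfl (fun ω _ => ?_)
    by_cases h1 : X ω = x <;> by_cases h2 : Gp ω = false <;> cases h3 : A ω <;>
      simp [h1, h2, h3]
  -- conditional expectation over the observational group as a mixture of arms
  have hmix : ∀ f : Ω → ℝ,
      cexp w (fun ω => X ω = x ∧ Gp ω = false) f
        = (D1 * cexp w (fun ω => X ω = x ∧ A ω = true ∧ Gp ω = false) f
            + D0 * cexp w (fun ω => X ω = x ∧ A ω = false ∧ Gp ω = false) f)
          / (D1 + D0) := by
    intro f
    rw [cexp_def, cexp_def, cexp_def, nsplit f, dsplit, ← hD1, ← hD0,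
      mul_div_cancel₀ _ hD1pos.ne', mul_div_cancel₀ _ hD0pos.ne']
  -- identification of E[S(a) | X = x] from the experimental arm a
  have hSexp : ∀ a : Bool,
      cexp w (fun ω => X ω = x ∧ A ω = a ∧ Gp ω = true) (Spot a)
        = cexp w (fun ω => X ω = x ∧ Gp ω = false) (Spot a) := by
    intro a
    have h1 : cexp w (fun ω => X ω = x ∧ A ω = a ∧ Gp ω = true) (Spot a)
        = cexp w (fun ω => X ω = x ∧ Gp ω = true ∧ A ω = a) (Spot a) :=
      cexp_pred_congr w _ (fun ω => by tauto)
    have h2 : cexp w (fun ω => X ω = x ∧ Gp ω = true ∧ A ω = a) (Spot a)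
        = cexp w (fun ω => X ω = x ∧ Gp ω = true) (Spot a) :=
      hinternal x a a (fun p => p.2)
    have h3 : cexp w (fun ω => X ω = x ∧ Gp ω = true) (Spot a)
        = cexp w (fun ω => X ω = x) (Spot a) :=
      hexternal x a true (fun p => p.2)
    have h4 : cexp w (fun ω => X ω = x ∧ Gp ω = false) (Spot a)
        = cexp w (fun ω => X ω = x) (Spot a) :=
      hexternal x a false (fun p => p.2)
    rw [h1, h2, h3, ← h4]
  -- identification of E[Y(a) | X = x] from the observational group
  have hYext : ∀ a : Bool,
      cexp w (fun ω => X ω = x) (Ypot a)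
        = cexp w (fun ω => X ω = x ∧ Gp ω = false) (Ypot a) := by
    intro a
    have h4 : cexp w (fun ω => X ω = x ∧ Gp ω = false) (Ypot a)
        = cexp w (fun ω => X ω = x) (Ypot a) :=
      hexternal x a false (fun p => p.1)
    rw [← h4]
  -- consistency rewrites
  have hYc : ∀ a g : Bool,
      cexp w (fun ω => X ω = x ∧ A ω = a ∧ Gp ω = g) Yobs
        = cexp w (fun ω => X ω = x ∧ A ω = a ∧ Gp ω = g) (Ypot a) :=
    fun a g => cexp_fun_congr w (fun ω hω => by rw [hconsY, hω.2.1])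
  have hSc : ∀ a g : Bool,
      cexp w (fun ω => X ω = x ∧ A ω = a ∧ Gp ω = g) Sobs
        = cexp w (fun ω => X ω = x ∧ A ω = a ∧ Gp ω = g) (Spot a) :=
    fun a g => cexp_fun_congr w (fun ω hω => by rw [hconsS, hω.2.1])
  have hc1 := hcaecb x true
  have hc0 := hcaecb x false
  -- put everything together
  rw [cexp_sub, hYext true, hYext false, hmix, hmix,
    hYc true false, hYc false false, hSc true true, hSc false true,
    hSc false false, hSc true false, hSexp true, hSexp false, hmix, hmix]
  set y11 := cexp w (fun ω => X ω = x ∧ A ω = true ∧ Gp ω = false) (Ypot true)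
  set y10 := cexp w (fun ω => X ω = x ∧ A ω = false ∧ Gp ω = false) (Ypot true)
  set y01 := cexp w (fun ω => X ω = x ∧ A ω = true ∧ Gp ω = false) (Ypot false)
  set y00 := cexp w (fun ω => X ω = x ∧ A ω = false ∧ Gp ω = false) (Ypot false)
  set s11 := cexp w (fun ω => X ω = x ∧ A ω = true ∧ Gp ω = false) (Spot true)
  set s10 := cexp w (fun ω => X ω = x ∧ A ω = false ∧ Gp ω = false) (Spot true)
  set s01 := cexp w (fun ω => X ω = x ∧ A ω = true ∧ Gp ω = false) (Spot false)
  set s00 := cexp w (fun ω => X ω = x ∧ A ω = false ∧ Gp ω = false) (Spot false)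
  have e1 : D0 * (s10 - s11) = D0 * (y10 - y11) := by rw [hc1]
  have e0 : D1 * (s00 - s01) = D1 * (y00 - y01) := by rw [hc0]
  field_simp
  nlinarith [e1, e0, hDO]
end
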